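/- arXiv:math/0611873 — 2 statements merged into one kernel-verified Lean document; each statement's English description precedes it below -/
import Mathlib

section
/- Let G be a group with finite symmetric generating set X. If (G,X) has the falsification by fellow traveler property with constant k ≥ 1, then (G,X) is almost convex(2) with constant at most 3k: for every n ∈ ℕ and all g, g' ∈ G with d(1,g) = d(1,g') = n and d(g,g') ≤ 2, there is an edge path from g to g' of length at most 3k all of whose vertices lie in the ball B(n) = {h ∈ G : d(1,h) ≤ n}. -/
/-!
Let `w` be a geodesic word for `g` and `v` one for `g⁻¹g'`. The word `wv` represents `g'` and is
at most `r` letters too long, so at most `r` applications of the falsification by fellow traveler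
property turn it into a geodesic word `u` for `g'`, each word `k`-fellow travelling its
predecessor. Walk back along `w` for `s = min(⌊k/2⌋, n)` steps to time `t = n - s`, cross from
each word to the next at time `t` along a geodesic of length at most `k` (its points lie within
`t + ⌊k/2⌋ ≤ n` of `1`, since both ends lie in `B(t)`), and finally walk along `u` to `g'`. The
path has length at most `2s + rk ≤ (r + 1)k`.
-/
section WordMetricPrelude

variable {G : Type*} [Group G]

/-- `w` is a word over the generating set `X`. -/
def IsWord (X : Finset G) (w : List G) : Prop := ∀ x ∈ w, x ∈ X

/-- The path traced out by the word `w`, at time `t`: the product of the first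
`min t w.length` letters of `w`. -/
def wordPath (w : List G) (t : ℕ) : G := (w.take t).prod

/-- The word metric on `G` with respect to `X`: the minimal length of a word
over `X` representing `g⁻¹ * h`. -/
noncomputable def wordDist (X : Finset G) (g h : G) : ℕ :=
  sInf {n : ℕ | ∃ w : List G, IsWord X w ∧ w.length = n ∧ w.prod = g⁻¹ * h}

/-- A word `w` over `X` is geodesic if its length equals the distance from `1`
to the element it represents. -/
def IsGeodesic (X : Finset G) (w : List G) : Prop :=
  IsWord X w ∧ w.length = wordDist X 1 w.prod

/-- Words `w` and `u` synchronously `k`-fellow travel. -/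
def SyncFellowTravel (X : Finset G) (k : ℕ) (w u : List G) : Prop :=
  ∀ t : ℕ, wordDist X (wordPath w t) (wordPath u t) ≤ k

/-- Words `w` and `u` asynchronously `k`-fellow travel: there is a nondecreasing
unbounded reparameterization `φ` with `d(w(t), u(φ t)) ≤ k` for all `t`. -/
def AsyncFellowTravel (X : Finset G) (k : ℕ) (w u : List G) : Prop :=
  ∃ φ : ℕ → ℕ, Monotone φ ∧ (∀ N : ℕ, ∃ t : ℕ, N ≤ φ t) ∧
    ∀ t : ℕ, wordDist X (wordPath w t) (wordPath u (φ t)) ≤ k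

/-- `(G, X)` has the synchronous falsification by fellow traveler property with
constant `k`. -/
def SyncFFTP (X : Finset G) (k : ℕ) : Prop :=
  ∀ w : List G, IsWord X w → ¬ IsGeodesic X w →
    ∃ u : List G, IsWord X u ∧ u.prod = w.prod ∧ u.length < w.length ∧
      SyncFellowTravel X k u w

/-- `(G, X)` has the asynchronous falsification by fellow traveler property with
constant `k`. -/
def AsyncFFTP (X : Finset G) (k : ℕ) : Prop :=
  ∀ w : List G, IsWord X w → ¬ IsGeodesic X w →
    ∃ u : List G, IsWord X u ∧ u.prod = w.prod ∧ u.length < w.length ∧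
      AsyncFellowTravel X k u w

end WordMetricPrelude

section IsWord

variable {G : Type*} {X : Finset G}

lemma IsWord.append {w v : List G} (hw : IsWord X w) (hv : IsWord X v) : IsWord X (w ++ v) :=
  fun x hx => (List.mem_append.1 hx).elim (hw x) (hv x)

lemma IsWord.take {w : List G} (hw : IsWord X w) (t : ℕ) : IsWord X (w.take t) :=
  fun x hx => hw x (List.mem_of_mem_take hx)

lemma IsWord.drop {w : List G} (hw : IsWord X w) (t : ℕ) : IsWord X (w.drop t) :=
  fun x hx => hw x (List.mem_of_mem_drop hx)

end IsWord

section WordMetric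

variable {G : Type*} [Group G] {X : Finset G}

lemma IsWord.map_inv_reverse (hXsym : ∀ x ∈ X, x⁻¹ ∈ X) {w : List G} (hw : IsWord X w) :
    IsWord X (w.map (·⁻¹)).reverse := by
  intro x hx
  obtain ⟨y, hy, rfl⟩ := List.mem_map.1 (List.mem_reverse.1 hx)
  exact hXsym y (hw y hy)

lemma exists_isWord_prod_eq (hXsym : ∀ x ∈ X, x⁻¹ ∈ X)
    (hXgen : Subgroup.closure (X : Set G) = ⊤) (g : G) : ∃ w, IsWord X w ∧ w.prod = g := by
  have hg : g ∈ (Subgroup.closure (X : Set G)).toSubmonoid := by simp [hXgen]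
  have hXinv : (X : Set G)⁻¹ ⊆ X := fun x hx => by simpa using hXsym _ hx
  rw [Subgroup.closure_toSubmonoid, Set.union_eq_left.2 hXinv] at hg
  exact Submonoid.exists_list_of_mem_closure hg

lemma wordDist_le_length {g h : G} {w : List G} (hw : IsWord X w) (hp : w.prod = g⁻¹ * h) :
    wordDist X g h ≤ w.length :=
  Nat.sInf_le ⟨w, hw, rfl, hp⟩

lemma exists_isWord_length_eq_wordDist (hXsym : ∀ x ∈ X, x⁻¹ ∈ X)
    (hXgen : Subgroup.closure (X : Set G) = ⊤) (g h : G) :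
    ∃ w, IsWord X w ∧ w.length = wordDist X g h ∧ w.prod = g⁻¹ * h := by
  obtain ⟨w, hw, hp⟩ := exists_isWord_prod_eq hXsym hXgen (g⁻¹ * h)
  exact Nat.sInf_mem (s := {n | ∃ w : List G, IsWord X w ∧ w.length = n ∧ w.prod = g⁻¹ * h})
    ⟨w.length, w, hw, rfl, hp⟩

lemma wordDist_mul_left (a g h : G) : wordDist X (a * g) (a * h) = wordDist X g h := by
  simp only [wordDist, mul_inv_rev, mul_assoc, inv_mul_cancel_left]

lemma wordDist_comm (hXsym : ∀ x ∈ X, x⁻¹ ∈ X) (hXgen : Subgroup.closure (X : Set G) = ⊤)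
    (g h : G) : wordDist X g h = wordDist X h g := by
  suffices key : ∀ a b : G, wordDist X a b ≤ wordDist X b a from
    le_antisymm (key g h) (key h g)
  intro a b
  obtain ⟨w, hw, hl, hp⟩ := exists_isWord_length_eq_wordDist hXsym hXgen b a
  calc wordDist X a b ≤ (w.map (·⁻¹)).reverse.length :=
        wordDist_le_length (hw.map_inv_reverse hXsym) (by rw [← List.prod_inv_reverse, hp]; group)
    _ = wordDist X b a := by simpa using hl

lemma wordDist_triangle (hXsym : ∀ x ∈ X, x⁻¹ ∈ X) (hXgen : Subgroup.closure (X : Set G) = ⊤)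
    (g h j : G) : wordDist X g j ≤ wordDist X g h + wordDist X h j := by
  obtain ⟨w, hw, hlw, hpw⟩ := exists_isWord_length_eq_wordDist hXsym hXgen g h
  obtain ⟨v, hv, hlv, hpv⟩ := exists_isWord_length_eq_wordDist hXsym hXgen h j
  calc wordDist X g j ≤ (w ++ v).length :=
        wordDist_le_length (hw.append hv) (by rw [List.prod_append, hpw, hpv]; group)
    _ = _ := by rw [List.length_append, hlw, hlv]

lemma wordPath_zero (w : List G) : wordPath w 0 = 1 := by simp [wordPath]

lemma wordPath_of_length_le {w : List G} {t : ℕ} (ht : w.length ≤ t) : wordPath w t = w.prod := by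
  rw [wordPath, List.take_of_length_le ht]

lemma wordPath_add (w : List G) (s j : ℕ) :
    wordPath w (s + j) = wordPath w s * wordPath (w.drop s) j := by
  rw [wordPath, List.take_add, List.prod_append]; rfl

lemma wordDist_one_wordPath_le {w : List G} (hw : IsWord X w) (t : ℕ) :
    wordDist X 1 (wordPath w t) ≤ t :=
  (wordDist_le_length (hw.take t) (by simp [wordPath])).trans (List.length_take_le _ _)

lemma wordDist_wordPath_le {w : List G} (hw : IsWord X w) {s t : ℕ} (hst : s ≤ t) :
    wordDist X (wordPath w s) (wordPath w t) ≤ t - s := by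
  obtain ⟨j, rfl⟩ := Nat.exists_eq_add_of_le hst
  rw [wordPath_add, ← mul_one (wordPath w s), mul_assoc, one_mul, wordDist_mul_left,
    Nat.add_sub_cancel_left]
  exact wordDist_one_wordPath_le (hw.drop s) j

/-- `a` and `b` are joined by an edge path of length at most `K` inside the ball `B(n)`. -/
def JoinedInBall (X : Finset G) (n K : ℕ) (a b : G) : Prop :=
  ∃ (m : ℕ) (p : ℕ → G), m ≤ K ∧ p 0 = a ∧ p m = b ∧
    (∀ i < m, wordDist X (p i) (p (i + 1)) ≤ 1) ∧ ∀ i ≤ m, wordDist X 1 (p i) ≤ n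

namespace JoinedInBall

variable {n K L : ℕ} {a b c : G}

lemma refl (ha : wordDist X 1 a ≤ n) (K : ℕ) : JoinedInBall X n K a a :=
  ⟨0, fun _ => a, Nat.zero_le K, rfl, rfl, fun _ hi => absurd hi (Nat.not_lt_zero _),
    fun _ _ => ha⟩

lemma mono {n' K' : ℕ} (h : JoinedInBall X n K a b) (hn : n ≤ n') (hK : K ≤ K') :
    JoinedInBall X n' K' a b :=
  let ⟨m, p, hm, h0, hmb, hstep, hball⟩ := h
  ⟨m, p, hm.trans hK, h0, hmb, hstep, fun i hi => (hball i hi).trans hn⟩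

lemma symm (hXsym : ∀ x ∈ X, x⁻¹ ∈ X) (hXgen : Subgroup.closure (X : Set G) = ⊤)
    (h : JoinedInBall X n K a b) : JoinedInBall X n K b a := by
  obtain ⟨m, p, hm, h0, hmb, hstep, hball⟩ := h
  refine ⟨m, fun i => p (m - i), hm, by simpa using hmb, by simpa using h0, fun i hi => ?_,
    fun i _ => hball _ (Nat.sub_le m i)⟩
  show wordDist X (p (m - i)) (p (m - (i + 1))) ≤ 1
  rw [wordDist_comm hXsym hXgen, show m - i = m - (i + 1) + 1 by omega]
  exact hstep _ (by omega)

lemma trans (h₁ : JoinedInBall X n K a b) (h₂ : JoinedInBall X n L b c) :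
    JoinedInBall X n (K + L) a c := by
  obtain ⟨m₁, p₁, hm₁, h₁0, h₁m, h₁step, h₁ball⟩ := h₁
  obtain ⟨m₂, p₂, hm₂, h₂0, h₂m, h₂step, h₂ball⟩ := h₂
  set p : ℕ → G := fun i => if i ≤ m₁ then p₁ i else p₂ (i - m₁)
  have hp₁ : ∀ i ≤ m₁, p i = p₁ i := fun i hi => if_pos hi
  have hp₂ : ∀ i, m₁ ≤ i → p i = p₂ (i - m₁) := by
    intro i hi
    obtain rfl | hlt := hi.eq_or_lt
    · rw [hp₁ m₁ le_rfl, h₁m, Nat.sub_self, h₂0]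
    · exact if_neg (Nat.not_le.2 hlt)
  refine ⟨m₁ + m₂, p, Nat.add_le_add hm₁ hm₂, by rw [hp₁ 0 (Nat.zero_le _), h₁0],
    by rw [hp₂ _ (Nat.le_add_right _ _), Nat.add_sub_cancel_left, h₂m], fun i hi => ?_,
    fun i hi => ?_⟩
  · rcases Nat.lt_or_ge i m₁ with hlt | hge
    · rw [hp₁ i hlt.le, hp₁ (i + 1) hlt]
      exact h₁step i hlt
    · rw [hp₂ i hge, hp₂ (i + 1) (by omega), show i + 1 - m₁ = i - m₁ + 1 by omega]
      exact h₂step _ (by omega)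
  · rcases Nat.le_total i m₁ with hle | hge
    · rw [hp₁ i hle]; exact h₁ball i hle
    · rw [hp₂ i hge]; exact h₂ball _ (by omega)

end JoinedInBall

lemma joinedInBall_mul_wordPath {w : List G} (hw : IsWord X w) (a : G) {n s t : ℕ}
    (hst : s ≤ t) (hball : ∀ i, s ≤ i → i ≤ t → wordDist X 1 (a * wordPath w i) ≤ n) :
    JoinedInBall X n (t - s) (a * wordPath w s) (a * wordPath w t) := by
  refine ⟨t - s, fun i => a * wordPath w (s + i), le_rfl, rfl,
    by simp only [Nat.add_sub_cancel' hst], fun i _ => ?_,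
    fun i hi => hball _ (by omega) (by omega)⟩
  simp only [wordDist_mul_left, ← Nat.add_assoc]
  simpa using wordDist_wordPath_le hw (Nat.le_succ (s + i))

lemma joinedInBall_wordPath {w : List G} (hw : IsWord X w) {n s t : ℕ} (hst : s ≤ t)
    (htn : t ≤ n) : JoinedInBall X n (t - s) (wordPath w s) (wordPath w t) := by
  simpa using joinedInBall_mul_wordPath hw 1 hst fun i _ hit => by
    simpa using (wordDist_one_wordPath_le hw i).trans (hit.trans htn)

/-- Following a geodesic from `a` to `b`, the distance from `1` is at most `c + i` after `i`
steps and at most `c + (d(a, b) - i)` before the end. -/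
lemma joinedInBall_wordDist (hXsym : ∀ x ∈ X, x⁻¹ ∈ X)
    (hXgen : Subgroup.closure (X : Set G) = ⊤) {a b : G} {c : ℕ} (ha : wordDist X 1 a ≤ c)
    (hb : wordDist X 1 b ≤ c) :
    JoinedInBall X (c + wordDist X a b / 2) (wordDist X a b) a b := by
  obtain ⟨v, hv, hlv, hpv⟩ := exists_isWord_length_eq_wordDist hXsym hXgen a b
  have hend : a * wordPath v (wordDist X a b) = b := by
    rw [wordPath_of_length_le hlv.le, hpv, mul_inv_cancel_left]
  have hball : ∀ i, 0 ≤ i → i ≤ wordDist X a b →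
      wordDist X 1 (a * wordPath v i) ≤ c + wordDist X a b / 2 := by
    intro i _ hi
    have hfrom_a : wordDist X 1 (a * wordPath v i) ≤ c + i := by
      calc _ ≤ wordDist X 1 a + wordDist X a (a * wordPath v i) :=
            wordDist_triangle hXsym hXgen _ _ _
        _ ≤ c + i := by
          have hshift := wordDist_mul_left (X := X) a 1 (wordPath v i)
          rw [mul_one] at hshift
          exact Nat.add_le_add ha (hshift ▸ wordDist_one_wordPath_le hv i)
    have hto_b : wordDist X 1 (a * wordPath v i) ≤ c + (wordDist X a b - i) := by
      calc _ ≤ wordDist X 1 b + wordDist X b (a * wordPath v i) :=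
            wordDist_triangle hXsym hXgen _ _ _
        _ ≤ c + (wordDist X a b - i) := by
          rw [wordDist_comm hXsym hXgen b]
          refine Nat.add_le_add hb ?_
          conv_lhs => rw [← hend, wordDist_mul_left]
          exact wordDist_wordPath_le hv hi
    omega
  simpa [wordPath_zero, hend] using
    joinedInBall_mul_wordPath hv a (Nat.zero_le (wordDist X a b)) hball

lemma joinedInBall_of_wordDist_le (hXsym : ∀ x ∈ X, x⁻¹ ∈ X)
    (hXgen : Subgroup.closure (X : Set G) = ⊤) {a b : G} {c k : ℕ} (ha : wordDist X 1 a ≤ c)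
    (hb : wordDist X 1 b ≤ c) (hab : wordDist X a b ≤ k) :
    JoinedInBall X (c + min (k / 2) c) k a b := by
  have hab' : wordDist X a b ≤ 2 * c := by
    calc wordDist X a b ≤ wordDist X a 1 + wordDist X 1 b := wordDist_triangle hXsym hXgen _ _ _
      _ ≤ 2 * c := by rw [wordDist_comm hXsym hXgen a]; omega
  exact (joinedInBall_wordDist hXsym hXgen ha hb).mono (by omega) hab

/-- Each application of the FFTP shortens the word by a letter and, at time `t`, costs one
crossing of length at most `k` to the shorter word. -/
lemma SyncFFTP.exists_isGeodesic_joinedInBall (hXsym : ∀ x ∈ X, x⁻¹ ∈ X)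
    (hXgen : Subgroup.closure (X : Set G) = ⊤) {k : ℕ} (hfftp : SyncFFTP X k) {w : List G}
    (hw : IsWord X w) (t : ℕ) :
    ∃ u, IsGeodesic X u ∧ u.prod = w.prod ∧
      JoinedInBall X (t + min (k / 2) t) ((w.length - wordDist X 1 w.prod) * k)
        (wordPath w t) (wordPath u t) := by
  induction hlen : w.length using Nat.strong_induction_on generalizing w with
  | _ N ih =>
  by_cases hgeo : IsGeodesic X w
  · exact ⟨w, hgeo, rfl, .refl ((wordDist_one_wordPath_le hw t).trans (Nat.le_add_right _ _)) _⟩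
  obtain ⟨u, hu, hprod, hlt, hft⟩ := hfftp w hw hgeo
  obtain ⟨u', hu', hprod', hjoin⟩ := ih u.length (hlen ▸ hlt) hu rfl
  have hcross : JoinedInBall X (t + min (k / 2) t) k (wordPath w t) (wordPath u t) :=
    joinedInBall_of_wordDist_le hXsym hXgen (wordDist_one_wordPath_le hw t)
      (wordDist_one_wordPath_le hu t) (wordDist_comm hXsym hXgen _ _ ▸ hft t)
  have hdist : wordDist X 1 w.prod ≤ u.length :=
    wordDist_le_length hu (by rw [inv_one, one_mul, hprod])
  refine ⟨u', hu', hprod'.trans hprod, (hcross.trans (hprod ▸ hjoin)).mono le_rfl ?_⟩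
  calc k + (u.length - wordDist X 1 w.prod) * k
        = (1 + (u.length - wordDist X 1 w.prod)) * k := by ring
    _ ≤ (N - wordDist X 1 w.prod) * k := Nat.mul_le_mul_right _ (by omega)

def AlmostConvex (X : Finset G) (r K : ℕ) : Prop :=
  ∀ (n : ℕ) (g g' : G), wordDist X 1 g = n → wordDist X 1 g' = n → wordDist X g g' ≤ r →
    JoinedInBall X n K g g'

theorem SyncFFTP.almostConvex (hXsym : ∀ x ∈ X, x⁻¹ ∈ X)
    (hXgen : Subgroup.closure (X : Set G) = ⊤) {k : ℕ} (hfftp : SyncFFTP X k) (r : ℕ) :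
    AlmostConvex X r ((r + 1) * k) := by
  intro n g g' hg hg' hgg'
  obtain ⟨w, hw, hlw, hpw⟩ := exists_isWord_length_eq_wordDist hXsym hXgen 1 g
  obtain ⟨v, hv, hlv, hpv⟩ := exists_isWord_length_eq_wordDist hXsym hXgen g g'
  rw [inv_one, one_mul] at hpw
  have hprod : (w ++ v).prod = g' := by rw [List.prod_append, hpw, hpv, mul_inv_cancel_left]
  have hpath_n : wordPath (w ++ v) n = g := by rw [wordPath, List.take_left' (hlw.trans hg), hpw]
  set t := n - min (k / 2) n
  obtain ⟨u, ⟨hu, hlu⟩, hpu, hjoin⟩ :=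
    hfftp.exists_isGeodesic_joinedInBall hXsym hXgen (hw.append hv) t
  rw [hprod] at hpu
  rw [hpu, hg'] at hlu
  rw [hprod, hg'] at hjoin
  have hback : JoinedInBall X n (n - t) g (wordPath (w ++ v) t) :=
    hpath_n ▸ (joinedInBall_wordPath (hw.append hv) (Nat.sub_le n _) le_rfl).symm hXsym hXgen
  have hforth : JoinedInBall X n (n - t) (wordPath u t) g' := by
    have h := joinedInBall_wordPath hu (s := t) (t := u.length) (by omega) hlu.le
    rwa [wordPath_of_length_le le_rfl, hpu, hlu] at h
  refine ((hback.trans (hjoin.mono (by omega) le_rfl)).trans hforth).mono le_rfl ?_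
  have hlen : ((w ++ v).length - n) * k ≤ r * k := by
    rw [List.length_append, hlw, hg, hlv]
    exact Nat.mul_le_mul_right _ (by omega)
  rw [add_one_mul]
  omega

end WordMetric

theorem fftp_implies_almost_convex_general {G : Type*} [Group G]
    (X : Finset G) (hXsym : ∀ x ∈ X, x⁻¹ ∈ X)
    (hXgen : Subgroup.closure (X : Set G) = ⊤)
    (k : ℕ) (hfftp : SyncFFTP X k) :
    ∀ (n : ℕ) (g g' : G), wordDist X 1 g = n → wordDist X 1 g' = n →
      wordDist X g g' ≤ 2 →
      ∃ (m : ℕ) (p : ℕ → G), m ≤ 3 * k ∧ p 0 = g ∧ p m = g' ∧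
        (∀ i < m, wordDist X (p i) (p (i + 1)) ≤ 1) ∧
        (∀ i ≤ m, wordDist X 1 (p i) ≤ n) :=
  hfftp.almostConvex hXsym hXgen 2

/-- The falsification by fellow traveler property with constant
`k ≥ 1` implies almost convexity(2) with constant at most `3k`. -/
theorem fftp_implies_almost_convex {G : Type*} [Group G]
    (X : Finset G) (hXsym : ∀ x ∈ X, x⁻¹ ∈ X)
    (hXgen : Subgroup.closure (X : Set G) = ⊤)
    (k : ℕ) (hk : 1 ≤ k) (hfftp : SyncFFTP X k) :
    ∀ (n : ℕ) (g g' : G), wordDist X 1 g = n → wordDist X 1 g' = n →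
      wordDist X g g' ≤ 2 →
      ∃ (m : ℕ) (p : ℕ → G), m ≤ 3 * k ∧ p 0 = g ∧ p m = g' ∧
        (∀ i < m, wordDist X (p i) (p (i + 1)) ≤ 1) ∧
        (∀ i ≤ m, wordDist X 1 (p i) ≤ n) :=
  fftp_implies_almost_convex_general X hXsym hXgen k hfftp
end

section
/- Let G be a group with finite symmetric generating set X, and suppose (G,X) has the falsification by fellow traveler property with constant k. Then G is finitely presented; more precisely, the kernel of the canonical surjection from the free group F(X) onto G is the normal closure in F(X) of the (finite) set of elements represented by words over X of length at most 2k+2 whose image in G is the identity. -/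
/-!
Let `N` be the normal closure of the relators of length at most `2k + 2`. It suffices to show that
every word `w` representing `1 ∈ G` is trivial modulo `N`, by induction on `|w|`. A nonempty such
word is not geodesic, so the FFTP gives a shorter word `u` representing `1` that synchronously
`k`-fellow travels with `w`. Joining `u(t)` to `w(t)` by a geodesic of length at most `k` for every
`t` cuts the region between `u` and `w` into squares of perimeter at most `2k + 2`, each a relator
in `N`; hence `u ≡ w` modulo `N`, and `u ≡ 1` by induction.
-/

section WordMetric

variable {G : Type*} {X : Finset G}

theorem isWord_map_val (w : List X) : IsWord X (w.map Subtype.val) := fun _ hx => by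
  obtain ⟨x, -, rfl⟩ := List.mem_map.1 hx
  exact x.2

variable [Group G]

theorem wordDist_self (g : G) : wordDist X g g = 0 :=
  Nat.sInf_eq_zero.2 <| .inl ⟨[], by simp [IsWord], rfl, by simp⟩

theorem not_isGeodesic_of_prod_eq_one {w : List G} (hw : w ≠ []) (h1 : w.prod = 1) :
    ¬ IsGeodesic X w := by
  rintro ⟨-, hlen⟩
  rw [h1, wordDist_self, List.length_eq_zero_iff] at hlen
  exact hw hlen

theorem exists_word_length_eq_wordDist {g h : G}
    (hgh : ∃ w : List X, (w.map Subtype.val).prod = g⁻¹ * h) :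
    ∃ w : List X, w.length = wordDist X g h ∧ (w.map Subtype.val).prod = g⁻¹ * h := by
  obtain ⟨w, hw⟩ := hgh
  obtain ⟨v, hvX, hlen, hprod⟩ :=
    Nat.sInf_mem (⟨_, w.map Subtype.val, isWord_map_val w, rfl, hw⟩ :
      {n : ℕ | ∃ w : List G, IsWord X w ∧ w.length = n ∧ w.prod = g⁻¹ * h}.Nonempty)
  lift v to List X using hvX
  exact ⟨v, by simpa [wordDist] using hlen, hprod⟩

def invLetter (hX : ∀ x ∈ X, x⁻¹ ∈ X) (x : X) : X := ⟨x⁻¹, hX x x.2⟩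

def invWord (hX : ∀ x ∈ X, x⁻¹ ∈ X) (w : List X) : List X := (w.map (invLetter hX)).reverse

@[simp]
theorem length_invWord (hX : ∀ x ∈ X, x⁻¹ ∈ X) (w : List X) :
    (invWord hX w).length = w.length := by
  simp [invWord]

theorem prod_map_val_invWord (hX : ∀ x ∈ X, x⁻¹ ∈ X) (w : List X) :
    ((invWord hX w).map Subtype.val).prod = ((w.map Subtype.val).prod)⁻¹ := by
  simp [invWord, invLetter, List.prod_inv_reverse, Function.comp_def]

theorem exists_connecting_word (hX : ∀ x ∈ X, x⁻¹ ∈ X) {u v : List X} {k t : ℕ}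
    (hd : wordDist X (wordPath (u.map Subtype.val) t) (wordPath (v.map Subtype.val) t) ≤ k) :
    ∃ c : List X, c.length ≤ k ∧
      ((u.take t ++ c).map Subtype.val).prod = ((v.take t).map Subtype.val).prod := by
  obtain ⟨c, hlen, hc⟩ := exists_word_length_eq_wordDist (X := X)
    (g := wordPath (u.map Subtype.val) t) (h := wordPath (v.map Subtype.val) t)
    ⟨invWord hX (u.take t) ++ v.take t, by
      simp only [List.map_append, List.prod_append, prod_map_val_invWord, wordPath,
        List.map_take]⟩
  refine ⟨c, hlen ▸ hd, ?_⟩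
  simp only [List.map_append, List.prod_append, hc, wordPath, List.map_take,
    mul_inv_cancel_left]

variable {H : Type*} [Group H]

def KillsRelatorsOfLengthLE (f : X → H) (n : ℕ) : Prop :=
  ∀ w : List X, w.length ≤ n → (w.map Subtype.val).prod = 1 → (w.map f).prod = 1

namespace KillsRelatorsOfLengthLE

variable {f : X → H} {n : ℕ}

theorem map_invLetter (hX : ∀ x ∈ X, x⁻¹ ∈ X) (hf : KillsRelatorsOfLengthLE f n) (hn : 2 ≤ n)
    (x : X) : f (invLetter hX x) = (f x)⁻¹ :=
  eq_inv_of_mul_eq_one_right <| by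
    simpa [invLetter] using hf [x, invLetter hX x] hn (by simp [invLetter])

theorem prod_map_invWord (hX : ∀ x ∈ X, x⁻¹ ∈ X) (hf : KillsRelatorsOfLengthLE f n) (hn : 2 ≤ n)
    (w : List X) : ((invWord hX w).map f).prod = ((w.map f).prod)⁻¹ := by
  simp [invWord, hf.map_invLetter hX hn, List.prod_inv_reverse, Function.comp_def]

theorem prod_map_eq (hX : ∀ x ∈ X, x⁻¹ ∈ X) (hf : KillsRelatorsOfLengthLE f n) (hn : 2 ≤ n)
    {u v : List X} (hlen : u.length + v.length ≤ n)
    (huv : (u.map Subtype.val).prod = (v.map Subtype.val).prod) :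
    (u.map f).prod = (v.map f).prod := by
  have h := hf (u ++ invWord hX v) (by simpa using hlen)
    (by rw [List.map_append, List.prod_append, prod_map_val_invWord, huv, mul_inv_cancel])
  rwa [List.map_append, List.prod_append, hf.prod_map_invWord hX hn, mul_inv_eq_one] at h

theorem prod_map_eq_of_syncFellowTravel (hX : ∀ x ∈ X, x⁻¹ ∈ X)
    {k : ℕ} (hf : KillsRelatorsOfLengthLE f (2 * k + 2)) {u v : List X}
    (huv : (u.map Subtype.val).prod = (v.map Subtype.val).prod)
    (hft : SyncFellowTravel X k (u.map Subtype.val) (v.map Subtype.val)) :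
    (u.map f).prod = (v.map f).prod := by
  -- `c t` is a rung joining `u(t)` to `v(t)`; consecutive rungs bound a relator of length
  -- at most `2k + 2`.
  choose c hclen hc using fun t => exists_connecting_word hX (hft t)
  have rung : ∀ t, ((u.take t ++ c t).map f).prod = ((v.take t).map f).prod := by
    intro t
    induction t with
    | zero => simpa using hf (c 0) ((hclen 0).trans (by omega)) (by simpa using hc 0)
    | succ t ih =>
      have hsquare : ((u[t]?.toList ++ c (t + 1)).map f).prod =
          ((c t ++ v[t]?.toList).map f).prod := by
        refine hf.prod_map_eq hX (by omega) ?_ ?_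
        · have := hclen t; have := hclen (t + 1)
          have : u[t]?.toList.length ≤ 1 := Option.length_toList_le
          have : v[t]?.toList.length ≤ 1 := Option.length_toList_le
          simp only [List.length_append]
          omega
        · have h1 := hc t
          have h2 := hc (t + 1)
          rw [List.take_add_one, List.take_add_one] at h2
          simp only [List.map_append, List.prod_append] at h1 h2 ⊢
          apply mul_left_cancel (a := ((u.take t).map Subtype.val).prod)
          rw [← mul_assoc, h2, ← mul_assoc, h1]
      rw [List.take_add_one, List.take_add_one]
      simp only [List.map_append, List.prod_append] at ih hsquare ⊢
      rw [mul_assoc, hsquare, ← mul_assoc, ih]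
  have hT := rung (u.length + v.length)
  have hcT := hc (u.length + v.length)
  rw [List.take_of_length_le (by omega), List.take_of_length_le (by omega)] at hT hcT
  rw [List.map_append, List.prod_append, huv, mul_eq_left] at hcT
  rwa [List.map_append, List.prod_append,
    hf _ ((hclen _).trans (by omega)) hcT, mul_one] at hT

theorem exists_prod_map_eq_of_mem_closure (hX : ∀ x ∈ X, x⁻¹ ∈ X)
    (hf : KillsRelatorsOfLengthLE f n) (hn : 2 ≤ n) {h : H}
    (hh : h ∈ Subgroup.closure (Set.range f)) : ∃ w : List X, (w.map f).prod = h := by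
  induction hh using Subgroup.closure_induction with
  | mem _ hx =>
    obtain ⟨x, rfl⟩ := hx
    exact ⟨[x], by simp⟩
  | one => exact ⟨[], rfl⟩
  | mul _ _ _ _ h₁ h₂ =>
    obtain ⟨w₁, rfl⟩ := h₁
    obtain ⟨w₂, rfl⟩ := h₂
    exact ⟨w₁ ++ w₂, by simp⟩
  | inv _ _ ih =>
    obtain ⟨w, rfl⟩ := ih
    exact ⟨invWord hX w, hf.prod_map_invWord hX hn w⟩

end KillsRelatorsOfLengthLE

theorem SyncFFTP.prod_map_eq_one (hX : ∀ x ∈ X, x⁻¹ ∈ X) {k : ℕ} (hfftp : SyncFFTP X k)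
    {f : X → H} (hf : KillsRelatorsOfLengthLE f (2 * k + 2)) (w : List X)
    (hw : (w.map Subtype.val).prod = 1) : (w.map f).prod = 1 := by
  rcases eq_or_ne w [] with rfl | hne
  · rfl
  obtain ⟨u, huX, hu, hlen, hft⟩ := hfftp _ (isWord_map_val w)
    (not_isGeodesic_of_prod_eq_one (mt List.map_eq_nil_iff.1 hne) hw)
  lift u to List X using huX
  rw [← hf.prod_map_eq_of_syncFellowTravel hX hu hft]
  exact SyncFFTP.prod_map_eq_one hX hfftp hf u (hu.trans hw)
termination_by w.length
decreasing_by simpa using hlen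

end WordMetric

theorem PresentedGroup.ker_lift_eq_normalClosure_of_injective {α G : Type*} [Group G] {f : α → G}
    {rels : Set (FreeGroup α)} (h : ∀ r ∈ rels, FreeGroup.lift f r = 1)
    (hinj : Function.Injective (PresentedGroup.toGroup h)) :
    (FreeGroup.lift f).ker = Subgroup.normalClosure rels := by
  ext r
  rw [MonoidHom.mem_ker, ← PresentedGroup.mk_eq_one_iff, ← map_eq_one_iff _ hinj]
  rfl

def shortRelators {G : Type*} [Group G] (X : Finset G) (n : ℕ) : Set (FreeGroup X) :=
  {r | ∃ w : List X, w.length ≤ n ∧ (w.map Subtype.val).prod = 1 ∧ (w.map FreeGroup.of).prod = r}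

section ShortRelators

variable {G : Type*} [Group G] {X : Finset G} {n : ℕ}

theorem shortRelators_finite : (shortRelators X n).Finite :=
  ((List.finite_length_le X n).image fun w => (w.map FreeGroup.of).prod).subset
    fun _ ⟨w, hlen, _, hw⟩ => ⟨w, hlen, hw⟩

theorem lift_eq_one_of_mem_shortRelators :
    ∀ r ∈ shortRelators X n, FreeGroup.lift Subtype.val r = 1 := by
  rintro _ ⟨w, -, hw, rfl⟩
  simpa [map_list_prod, Function.comp_def] using hw

theorem killsRelatorsOfLengthLE_of :
    KillsRelatorsOfLengthLE (PresentedGroup.of : X → PresentedGroup (shortRelators X n)) n :=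
  fun w hlen hw => by
    rw [← PresentedGroup.one_of_mem (rels := shortRelators X n) ⟨w, hlen, hw, rfl⟩,
      map_list_prod, List.map_map]
    rfl

theorem SyncFFTP.injective_toGroup (hX : ∀ x ∈ X, x⁻¹ ∈ X) {k : ℕ} (hfftp : SyncFFTP X k) :
    Function.Injective (PresentedGroup.toGroup
      (lift_eq_one_of_mem_shortRelators (X := X) (n := 2 * k + 2))) := by
  refine (injective_iff_map_eq_one _).2 fun p hp => ?_
  have hof := killsRelatorsOfLengthLE_of (X := X) (n := 2 * k + 2)
  obtain ⟨w, rfl⟩ := hof.exists_prod_map_eq_of_mem_closure hX (by omega)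
    (by rw [PresentedGroup.closure_range_of]; exact Subgroup.mem_top p)
  rw [map_list_prod, List.map_map] at hp
  exact hfftp.prod_map_eq_one hX hof w (by simpa [Function.comp_def] using hp)

end ShortRelators

theorem fftp_implies_finitely_presented_general {G : Type*} [Group G]
    (X : Finset G) (hXsym : ∀ x ∈ X, x⁻¹ ∈ X)
    (k : ℕ) (hfftp : SyncFFTP X k) :
    ({ r : FreeGroup {x : G // x ∈ X} |
        ∃ w : List {x : G // x ∈ X}, w.length ≤ 2 * k + 2 ∧
          (w.map Subtype.val).prod = (1 : G) ∧
          (w.map FreeGroup.of).prod = r } : Set (FreeGroup {x : G // x ∈ X})).Finite ∧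
    (FreeGroup.lift (fun x : {x : G // x ∈ X} => (x : G))).ker =
      Subgroup.normalClosure
        { r : FreeGroup {x : G // x ∈ X} |
          ∃ w : List {x : G // x ∈ X}, w.length ≤ 2 * k + 2 ∧
            (w.map Subtype.val).prod = (1 : G) ∧
            (w.map FreeGroup.of).prod = r } :=
  ⟨shortRelators_finite,
    PresentedGroup.ker_lift_eq_normalClosure_of_injective _ (SyncFFTP.injective_toGroup hXsym hfftp)⟩

/-- If `(G,X)` has the falsification by fellow traveler
property with constant `k`, then `G` is finitely presented: the kernel of the
canonical surjection `F(X) → G` is the normal closure of the (finite) set of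
elements of `F(X)` represented by words over `X` of length at most `2k + 2`
whose image in `G` is the identity. -/
theorem fftp_implies_finitely_presented {G : Type*} [Group G]
    (X : Finset G) (hXsym : ∀ x ∈ X, x⁻¹ ∈ X)
    (hXgen : Subgroup.closure (X : Set G) = ⊤)
    (k : ℕ) (hfftp : SyncFFTP X k) :
    ({ r : FreeGroup {x : G // x ∈ X} |
        ∃ w : List {x : G // x ∈ X}, w.length ≤ 2 * k + 2 ∧
          (w.map Subtype.val).prod = (1 : G) ∧
          (w.map FreeGroup.of).prod = r } : Set (FreeGroup {x : G // x ∈ X})).Finite ∧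
    (FreeGroup.lift (fun x : {x : G // x ∈ X} => (x : G))).ker =
      Subgroup.normalClosure
        { r : FreeGroup {x : G // x ∈ X} |
          ∃ w : List {x : G // x ∈ X}, w.length ≤ 2 * k + 2 ∧
            (w.map Subtype.val).prod = (1 : G) ∧
            (w.map FreeGroup.of).prod = r } :=
  fftp_implies_finitely_presented_general X hXsym k hfftp
end
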